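/- arXiv:2307.00674 — 5 statements merged into one kernel-verified Lean document; each statement's English description precedes it below -/
import Mathlib

section
/- Given a fixed 2-element subset S of {1,2,3,4} assigned to a 2-edge, there are exactly 2 ordered pairs of 1-element subsets whose union is S; consequently, a web consisting of a 2-edge with a digon of two parallel 1-edges inserted has exactly twice as many colorings as the same web with the digon replaced by a 2-edge. -/
open Finset

theorem Finset.pair_eq_pair_iff {α : Type*} [DecidableEq α] {x y z w : α} :
    ({x, y} : Finset α) = {z, w} ↔ x = z ∧ y = w ∨ x = w ∧ y = z := by
  rw [← coe_inj, coe_pair, coe_pair, Set.pair_eq_pair_iff]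

section OrderedPairs

variable {α : Type*} [DecidableEq α] [Fintype α]

theorem filter_singleton_union_eq_pair {a b : α} :
    univ.filter (fun p : α × α => {p.1} ∪ {p.2} = ({a, b} : Finset α)) = {(a, b), (b, a)} := by
  ext ⟨x, y⟩
  simp [pair_eq_pair_iff]

theorem card_filter_singleton_union_eq_of_card_eq_two {S : Finset α} (hS : #S = 2) :
    #(univ.filter fun p : α × α => {p.1} ∪ {p.2} = S) = 2 := by
  obtain ⟨a, b, hab, rfl⟩ := card_eq_two.mp hS
  rw [filter_singleton_union_eq_pair, card_pair]
  simp [hab]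

end OrderedPairs

/-- For a fixed 2-element subset `S` of the pigment set, there are exactly 2
ordered pairs of 1-element subsets whose union is `S`; consequently (summing
over all possible colors `S` of the 2-strand, weighted by the number `w S` of
colorings of the rest of the web), a web with a digon of two parallel 1-edges
inserted in a 2-edge has exactly twice as many colorings as the web with the
digon replaced by a 2-edge. -/
theorem digon_two_thin_edges_doubling :
    (∀ S : Finset (Fin 4), S.card = 2 →
      (Finset.univ.filter (fun p : Fin 4 × Fin 4 =>
        ({p.1} ∪ {p.2} : Finset (Fin 4)) = S)).card = 2) ∧
    (∀ w : Finset (Fin 4) → ℕ,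
      ∑ S ∈ Finset.powersetCard 2 (Finset.univ : Finset (Fin 4)),
        w S * (Finset.univ.filter (fun p : Fin 4 × Fin 4 =>
          ({p.1} ∪ {p.2} : Finset (Fin 4)) = S)).card
      = 2 * ∑ S ∈ Finset.powersetCard 2 (Finset.univ : Finset (Fin 4)), w S) := by
  refine ⟨fun S hS => card_filter_singleton_union_eq_of_card_eq_two hS, fun w => ?_⟩
  rw [mul_sum]
  refine sum_congr rfl fun S hS => ?_
  rw [card_filter_singleton_union_eq_of_card_eq_two (mem_powersetCard.mp hS).2, mul_comm]
end

section
/- Over F_2, for a Young diagram λ = (λ_1, λ_2) with λ_1 ≥ λ_2 ≥ 2, the sum over unordered pairs {i,j} ⊂ {1,2,3,4} of s_λ(X_i, X_j) / ((X_i+X_k)(X_i+X_l)(X_j+X_k)(X_j+X_l)) (where {i,j,k,l} = {1,2,3,4}) equals the Schur polynomial s_{(λ_1-2, λ_2-2)} in the four variables X_1,...,X_4; and if λ_2 ≤ 1 the sum equals 0. -/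
/-!
Put every summand over the common denominator `∏_{i<j} (Xᵢ + Xⱼ)`, the Vandermonde
determinant. The summand for `{i,j}` then has numerator
`(Xᵢ^{λ₁+1} Xⱼ^{λ₂} + Xᵢ^{λ₂} Xⱼ^{λ₁+1}) (Xₖ + Xₗ)`, and these six numerators are exactly
the terms of the Laplace expansion, along its first two columns, of the alternant
`det (Xᵢ^{eⱼ})` with exponents `e = (λ₁+1, λ₂, 1, 0)` (in characteristic two all signs
disappear). For `λ₂ ≥ 2` these are the exponents `μ + (3,2,1,0)` of `μ = (λ₁-2, λ₂-2, 0, 0)`,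
so the sum is the bialternant `s_μ`; for `λ₂ ≤ 1` two exponents coincide and the alternant
vanishes.
-/

open MvPolynomial

noncomputable section

/-- The image of `Xᵢ` in the field of rational functions over `F₂[X₁,…,X₄]`. -/
def x (i : Fin 4) : FractionRing (MvPolynomial (Fin 4) (ZMod 2)) :=
  algebraMap (MvPolynomial (Fin 4) (ZMod 2)) _ (X i)

/-- The two-variable Schur polynomial `s_{(l₁,l₂)}(u,v)` over `F₂`:
`(u^{l₁+1} v^{l₂} + u^{l₂} v^{l₁+1})/(u+v)`. -/
def schur2 (l1 l2 : ℕ) (u v : FractionRing (MvPolynomial (Fin 4) (ZMod 2))) :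
    FractionRing (MvPolynomial (Fin 4) (ZMod 2)) :=
  (u ^ (l1 + 1) * v ^ l2 + u ^ l2 * v ^ (l1 + 1)) / (u + v)

/-- The four-variable Schur polynomial `s_{(m₁,m₂,0,0)}` given by the ratio of
alternants (bialternant formula); over a field of characteristic two signs are
irrelevant. -/
def schur4 (m1 m2 : ℕ) : FractionRing (MvPolynomial (Fin 4) (ZMod 2)) :=
  Matrix.det (Matrix.of fun i j : Fin 4 => x i ^ ((![m1, m2, 0, 0] : Fin 4 → ℕ) j + (3 - (j : ℕ)))) /
    Matrix.det (Matrix.of fun i j : Fin 4 => x i ^ (3 - (j : ℕ)))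

/-- The thick-sphere evaluation: the sum over unordered pairs `{i,j}` of
pigments of `s_λ(Xᵢ,Xⱼ)/((Xᵢ+Xₖ)(Xᵢ+Xₗ)(Xⱼ+Xₖ)(Xⱼ+Xₗ))` where `{k,l}` is the
complement of `{i,j}`. -/
def thickSphereEval (l1 l2 : ℕ) : FractionRing (MvPolynomial (Fin 4) (ZMod 2)) :=
  ∑ p ∈ Finset.univ.filter (fun p : Fin 4 × Fin 4 => p.1 < p.2),
    schur2 l1 l2 (x p.1) (x p.2) /
      ∏ m ∈ (Finset.univ : Finset (Fin 4)) \ {p.1, p.2}, ((x p.1 + x m) * (x p.2 + x m))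

section Alternant

variable {R : Type*} [CommRing R]

def alternant {n : ℕ} (u : Fin n → R) (e : Fin n → ℕ) : R :=
  (Matrix.of fun i j => u i ^ e j).det

theorem alternant_eq_zero_of_exponent_eq {n : ℕ} (u : Fin n → R) {e : Fin n → ℕ} {j j' : Fin n}
    (hne : j ≠ j') (he : e j = e j') : alternant u e = 0 :=
  Matrix.det_zero_of_column_eq hne fun i => by simp [he]

variable [CharP R 2] (u : Fin 4 → R)

theorem alternant_pow_pow_one_zero (a b : ℕ) : alternant u ![a, b, 1, 0] =
    (u 0 ^ a * u 1 ^ b + u 0 ^ b * u 1 ^ a) * (u 2 + u 3)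
    + (u 0 ^ a * u 2 ^ b + u 0 ^ b * u 2 ^ a) * (u 1 + u 3)
    + (u 0 ^ a * u 3 ^ b + u 0 ^ b * u 3 ^ a) * (u 1 + u 2)
    + (u 1 ^ a * u 2 ^ b + u 1 ^ b * u 2 ^ a) * (u 0 + u 3)
    + (u 1 ^ a * u 3 ^ b + u 1 ^ b * u 3 ^ a) * (u 0 + u 2)
    + (u 2 ^ a * u 3 ^ b + u 2 ^ b * u 3 ^ a) * (u 0 + u 1) := by
  rw [alternant, Matrix.det_succ_column_zero]
  simp only [Fin.sum_univ_four, Matrix.det_fin_three, Fin.succAbove, CharTwo.sub_eq_add,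
    CharTwo.neg_eq, Matrix.of_apply, Matrix.submatrix_apply, Matrix.cons_val_zero, Matrix.cons_val_one,
    Matrix.cons_val, Fin.castSucc_zero, Fin.castSucc_one, Fin.succ_zero_eq_one, Fin.succ_one_eq_two,
    Fin.reduceCastSucc, Fin.reduceSucc, Fin.reduceLT, Fin.lt_one_iff, Fin.reduceEq, lt_self_iff_false,
    not_lt_zero, zero_lt_one, ↓reduceIte, pow_zero, pow_one, one_pow, one_mul, mul_one]
  ring

theorem alternant_three_two_one_zero : alternant u ![3, 2, 1, 0] =
    (u 0 + u 1) * (u 0 + u 2) * (u 0 + u 3) * (u 1 + u 2) * (u 1 + u 3) * (u 2 + u 3) := by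
  have hrev : (Matrix.of fun i j => u i ^ (![3, 2, 1, 0] : Fin 4 → ℕ) j) =
      (Matrix.vandermonde u).submatrix id Fin.revPerm := by
    ext i j
    fin_cases j <;> rfl
  have hsign : Equiv.Perm.sign (Fin.revPerm : Equiv.Perm (Fin 4)) = 1 := by decide
  rw [alternant, hrev, Matrix.det_permute', hsign, Matrix.det_vandermonde]
  simp only [Units.val_one, Int.cast_one, ← Finset.filter_lt_eq_Ioi, Finset.prod_filter,
    Fin.prod_univ_four, CharTwo.sub_eq_add, Fin.reduceLT, Fin.lt_one_iff, Fin.reduceEq, not_lt_zero,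
    lt_self_iff_false, one_ne_zero, ↓reduceIte, mul_ite, ite_mul, one_mul, mul_one]
  ring

end Alternant

open Finset in
theorem sum_pairs_div_eq_alternant_div {F : Type*} [Field F] [CharP F 2] {u : Fin 4 → F}
    (hu : Function.Injective u) (a b : ℕ) :
    ∑ p ∈ univ.filter (fun p : Fin 4 × Fin 4 => p.1 < p.2),
      (u p.1 ^ a * u p.2 ^ b + u p.1 ^ b * u p.2 ^ a) / (u p.1 + u p.2) /
        ∏ m ∈ univ \ {p.1, p.2}, ((u p.1 + u m) * (u p.2 + u m)) =
      alternant u ![a, b, 1, 0] / alternant u ![3, 2, 1, 0] := by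
  simp only [sum_filter, Fintype.sum_prod_type, Fin.sum_univ_four, sdiff_eq_filter, prod_filter,
    Fin.prod_univ_four, mem_insert, mem_singleton, Fin.reduceLT, Fin.lt_one_iff, Fin.reduceEq,
    lt_self_iff_false, not_lt_zero, zero_ne_one, one_ne_zero, not_true_eq_false,
    not_false_eq_true, or_false, or_true, ↓reduceIte, zero_add, add_zero, one_mul, mul_one]
  rw [alternant_pow_pow_one_zero, alternant_three_two_one_zero]
  field_simp [CharTwo.add_eq_zero, hu.eq_iff]
  ring

theorem x_injective : Function.Injective x :=
  (IsFractionRing.injective (MvPolynomial (Fin 4) (ZMod 2)) _).comp X_injective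

theorem thickSphereEval_eq_alternant_div (l1 l2 : ℕ) :
    thickSphereEval l1 l2 = alternant x ![l1 + 1, l2, 1, 0] / alternant x ![3, 2, 1, 0] :=
  sum_pairs_div_eq_alternant_div x_injective (l1 + 1) l2

theorem schur4_eq_alternant_div (m1 m2 : ℕ) :
    schur4 m1 m2 = alternant x ![m1 + 3, m2 + 2, 1, 0] / alternant x ![3, 2, 1, 0] := by
  have hnum : (fun j : Fin 4 => (![m1, m2, 0, 0] : Fin 4 → ℕ) j + (3 - (j : ℕ))) =
      ![m1 + 3, m2 + 2, 1, 0] := by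
    funext j
    fin_cases j <;> rfl
  have hden : (fun j : Fin 4 => 3 - (j : ℕ)) = ![3, 2, 1, 0] := by
    funext j
    fin_cases j <;> rfl
  rw [schur4, alternant, alternant, ← hnum, ← hden]

/-- Over `F₂`, for a Young diagram `λ = (λ₁, λ₂)` with `λ₁ ≥ λ₂`: if `λ₂ ≥ 2`,
the thick sphere evaluation equals the Schur polynomial `s_{(λ₁-2, λ₂-2)}` in
four variables, and if `λ₂ ≤ 1`, it equals `0`. -/
theorem thick_sphere_evaluation (l1 l2 : ℕ) (h : l2 ≤ l1) :
    (2 ≤ l2 → thickSphereEval l1 l2 = schur4 (l1 - 2) (l2 - 2)) ∧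
    (l2 ≤ 1 → thickSphereEval l1 l2 = 0) := by
  rw [thickSphereEval_eq_alternant_div]
  refine ⟨fun h2 => ?_, fun h1 => ?_⟩
  · rw [schur4_eq_alternant_div, show l1 - 2 + 3 = l1 + 1 by omega, Nat.sub_add_cancel h2]
  · suffices alternant x ![l1 + 1, l2, 1, 0] = 0 by rw [this, zero_div]
    interval_cases l2
    · exact alternant_eq_zero_of_exponent_eq x (j := 1) (j' := 3) (by decide) rfl
    · exact alternant_eq_zero_of_exponent_eq x (j := 1) (j' := 2) (by decide) rfl

end
end

section
/- For a pigment i in P = {1,2,3,4} and distinct pigments j, k, l with {i,j,k,l} = P, the identity (over the fraction field of F_2[X_1,...,X_4]) holds: 1/((X_i+X_j)(X_i+X_k)(X_i+X_l)) = ((E_3 + E_2 E_1) + E_1^2 X_i + E_1 X_i^2)/δ, where δ = ∏_{a<b}(X_a + X_b) and E_m are elementary symmetric polynomials in X_1,...,X_4. -/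
/-!
The product `δ = ∏_{a<b} (X_a + X_b)` is symmetric: over any commutative ring it equals
`E₁E₂E₃ - E₁²E₄ - E₃²`. Expressing the `E_m` through the reordered list `Xᵢ, Xⱼ, Xₖ, Xₗ`
therefore factors `δ` as `(Xᵢ+Xⱼ)(Xᵢ+Xₖ)(Xᵢ+Xₗ) · (Xⱼ+Xₖ)(Xⱼ+Xₗ)(Xₖ+Xₗ)`, and the second factor is
`E₁E₂ - E₃ - E₁²Xᵢ + E₁Xᵢ²`, which is the claimed numerator modulo 2.
-/

open MvPolynomial

noncomputable section

/-- The image of the `n`-th elementary symmetric polynomial. -/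
def e (n : ℕ) : FractionRing (MvPolynomial (Fin 4) (ZMod 2)) :=
  algebraMap (MvPolynomial (Fin 4) (ZMod 2)) _ (esymm (Fin 4) (ZMod 2) n)

/-- `δ = ∏_{a<b} (X_a + X_b)`. -/
def deltaElt : FractionRing (MvPolynomial (Fin 4) (ZMod 2)) :=
  ∏ p ∈ Finset.univ.filter (fun p : Fin 4 × Fin 4 => p.1 < p.2), (x p.1 + x p.2)

namespace Multiset

variable {R : Type*} [CommSemiring R]

theorem esymm_zero_right (s : Multiset R) : s.esymm 0 = 1 := by
  simp [esymm, powersetCard_zero_left]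

theorem esymm_zero_left_succ (n : ℕ) : (0 : Multiset R).esymm (n + 1) = 0 := by
  simp [esymm, powersetCard_zero_right]

theorem esymm_cons_succ (a : R) (s : Multiset R) (n : ℕ) :
    (a ::ₘ s).esymm (n + 1) = s.esymm (n + 1) + a * s.esymm n := by
  simp only [esymm, powersetCard_cons, map_add, sum_add, map_map, Function.comp_def, prod_cons,
    sum_map_mul_left]

end Multiset

section FourElements

variable {R : Type*} [CommRing R] (a b c d : R)

theorem prod_pairwise_add_eq_esymm :
    (a + b) * (a + c) * (a + d) * ((b + c) * (b + d) * (c + d)) =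
      Multiset.esymm {a, b, c, d} 1 * Multiset.esymm {a, b, c, d} 2 * Multiset.esymm {a, b, c, d} 3
        - Multiset.esymm {a, b, c, d} 1 ^ 2 * Multiset.esymm {a, b, c, d} 4
        - Multiset.esymm {a, b, c, d} 3 ^ 2 := by
  simp only [Multiset.insert_eq_cons, ← Multiset.cons_zero, Multiset.esymm_cons_succ,
    Multiset.esymm_zero_right, Multiset.esymm_zero_left_succ]
  ring

theorem prod_add_add_eq_esymm :
    (b + c) * (b + d) * (c + d) =
      Multiset.esymm {a, b, c, d} 1 * Multiset.esymm {a, b, c, d} 2 - Multiset.esymm {a, b, c, d} 3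
        - Multiset.esymm {a, b, c, d} 1 ^ 2 * a + Multiset.esymm {a, b, c, d} 1 * a ^ 2 := by
  simp only [Multiset.insert_eq_cons, ← Multiset.cons_zero, Multiset.esymm_cons_succ,
    Multiset.esymm_zero_right, Multiset.esymm_zero_left_succ]
  ring

end FourElements

theorem Finset.univ_val_eq_of_toFinset_eq {α : Type*} [Fintype α] [DecidableEq α] {m : Multiset α}
    (hm : m.toFinset = Finset.univ) (hcard : Multiset.card m ≤ Fintype.card α) :
    Finset.univ.val = m :=
  Multiset.eq_of_le_of_card_le
    ((Multiset.le_iff_subset Finset.univ.nodup).2 fun a _ => by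
      rw [← Multiset.mem_toFinset, hm]; exact Finset.mem_univ a)
    hcard

theorem e_eq_esymm (n : ℕ) : e n = (Finset.univ.val.map x).esymm n := by
  rw [← aeval_esymm_eq_multiset_esymm (Fin 4) (ZMod 2), e]
  exact (congrArg _ (aeval_X_left_apply _)).symm.trans (aeval_algebraMap_apply _ X _).symm

theorem x_add_x_ne_zero {a b : Fin 4} (hab : a ≠ b) : x a + x b ≠ 0 := by
  rw [x, x, ← map_add, map_ne_zero_iff _ (IsFractionRing.injective _ _)]
  intro h
  simpa [coeff_X, Finsupp.single_left_inj, hab.symm] using congrArg (coeff (Finsupp.single a 1)) h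

theorem deltaElt_ne_zero : deltaElt ≠ 0 :=
  Finset.prod_ne_zero_iff.2 fun _ hp => x_add_x_ne_zero (Finset.mem_filter.1 hp).2.ne

theorem deltaElt_eq_esymm : deltaElt = e 1 * e 2 * e 3 - e 1 ^ 2 * e 4 - e 3 ^ 2 := by
  have hx : Finset.univ.val.map x = {x 0, x 1, x 2, x 3} := rfl
  have hpairs : Finset.univ.filter (fun p : Fin 4 × Fin 4 => p.1 < p.2) =
      {(0, 1), (0, 2), (0, 3), (1, 2), (1, 3), (2, 3)} := by decide
  simp only [e_eq_esymm, hx, ← prod_pairwise_add_eq_esymm, deltaElt, hpairs]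
  simp [mul_assoc]

/-- The hollow dot identity: for a pigment `i` and distinct pigments `j,k,l`
with `{i,j,k,l} = {1,2,3,4}`, in the fraction field of `F₂[X₁,…,X₄]` one has
`1/((Xᵢ+Xⱼ)(Xᵢ+Xₖ)(Xᵢ+Xₗ)) = ((E₃ + E₂E₁) + E₁²Xᵢ + E₁Xᵢ²)/δ`. -/
theorem hollow_dot_thin_identity (i j k l : Fin 4)
    (h : ({i, j, k, l} : Finset (Fin 4)) = Finset.univ) :
    1 / ((x i + x j) * (x i + x k) * (x i + x l)) =
      ((e 3 + e 2 * e 1) + e 1 ^ 2 * x i + e 1 * x i ^ 2) / deltaElt := by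
  have hx : Finset.univ.val.map x = {x i, x j, x k, x l} := by
    rw [Finset.univ_val_eq_of_toFinset_eq (m := {i, j, k, l}) (by simpa using h) (by simp)]
    simp
  have he (n : ℕ) : e n = Multiset.esymm {x i, x j, x k, x l} n := by rw [e_eq_esymm, hx]
  have hQ : (x j + x k) * (x j + x l) * (x k + x l) =
      (e 3 + e 2 * e 1) + e 1 ^ 2 * x i + e 1 * x i ^ 2 := by
    rw [prod_add_add_eq_esymm (x i), he, he, he]
    simp only [CharTwo.sub_eq_add]
    ring
  have hδ : deltaElt =
      (x i + x j) * (x i + x k) * (x i + x l) * ((x j + x k) * (x j + x l) * (x k + x l)) := by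
    rw [deltaElt_eq_esymm, he, he, he, he, prod_pairwise_add_eq_esymm]
  have hQ0 := right_ne_zero_of_mul (hδ ▸ deltaElt_ne_zero)
  rw [hδ, ← hQ, div_mul_cancel_right₀ hQ0, one_div]

end
end

section
/- Local square relation for four-colorings: for webs agreeing outside a disk with two thin and two thick boundary edges, the number of colorings of the web containing a square with edges of thicknesses 1,2,1,2 (alternating) equals the number of colorings of the web with the square replaced by a dumbbell with two defects plus the number with the square replaced by two disjoint arcs (one thin, one thick). Explicitly, for each boundary coloring (i, ij, i, ij): 1 = 0 + 1; (k, ij, k, ij): 2 = 1 + 1; (j, ij, k, ik): 0 = 0 + 0; (k, ij, j, ik): 1 = 1 + 0, where {i,j,k,l} = {1,2,3,4}. -/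
/-- Colorings of the square web with two thin boundary colors `a, c` and two
thick boundary colors `B, D`: internal thin edges `xt, xr, xb` and a thick edge
`Y`, with the 112-vertex condition (thick color = disjoint union of the two thin
colors) at each of the four corners. -/
def squareColoringCount (a c : Fin 4) (B D : Finset (Fin 4)) : ℕ :=
  (Finset.univ.filter (fun q : Fin 4 × Fin 4 × Fin 4 × Finset (Fin 4) =>
    q.2.2.2 = ({a, q.1} : Finset (Fin 4)) ∧ a ≠ q.1 ∧
    q.2.2.2 = ({c, q.2.2.1} : Finset (Fin 4)) ∧ c ≠ q.2.2.1 ∧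
    B = ({q.1, q.2.1} : Finset (Fin 4)) ∧ q.1 ≠ q.2.1 ∧
    D = ({q.2.2.1, q.2.1} : Finset (Fin 4)) ∧ q.2.2.1 ≠ q.2.1)).card

/-- Colorings of the dumbbell web with two defects: a thin bar colored `{x}`,
two 112-vertices producing thick colors `{a,x}` and `{c,x}`, each followed by a
defect (complementation) before reaching the thick boundary colors `B` and `D`. -/
def dumbbellColoringCount (a c : Fin 4) (B D : Finset (Fin 4)) : ℕ :=
  (Finset.univ.filter (fun x : Fin 4 =>
    a ≠ x ∧ B = ({a, x} : Finset (Fin 4))ᶜ ∧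
    c ≠ x ∧ D = ({c, x} : Finset (Fin 4))ᶜ)).card

/-- Colorings of the two disjoint arcs (one thin connecting the thin boundary
points, one thick connecting the thick boundary points). -/
def arcsColoringCount (a c : Fin 4) (B D : Finset (Fin 4)) : ℕ :=
  if a = c ∧ B = D then 1 else 0

/-! The thick inner edge of the square is forced to be `{a, t}`, where `t` colors the top thin
edge, so only thin colors remain. If `a ≠ c`, the corners force `t = c` and the bottom thin edge
to be `a`; a coloring is then a color `r ∉ {a, c}` with `B = {c, r}`, `D = {a, r}`, while a
dumbbell coloring is a color `x ∉ {a, c}` with `Bᶜ = {a, x}`, `Dᶜ = {c, x}`. Exchanging the two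
colors of `{a, c}ᶜ` matches the two, and the arcs contribute nothing. If `a = c`, all three webs
need `B = D`; the square then has one coloring per color of `B` other than `a`, the dumbbell one
coloring if `a ∉ B` and none otherwise, and the arcs one: `2 = 1 + 1` or `1 = 0 + 1`. -/

open Finset

theorem Finset.compl_pair_eq_of_compl_pair_eq {α : Type*} [Fintype α] [DecidableEq α]
    {a c p q : α} (hac : a ≠ c) (hpq : p ≠ q) (h : ({a, c} : Finset α)ᶜ = {p, q}) :
    ({a, p} : Finset α)ᶜ = {c, q} := by
  have hx (x : α) : x ∉ ({a, c} : Finset α) ↔ x = p ∨ x = q := by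
    rw [← mem_compl, h, mem_insert, mem_singleton]
  have hp := (hx p).mpr (.inl rfl)
  have hq := (hx q).mpr (.inr rfl)
  ext x
  have := hx x
  simp only [mem_compl, mem_insert, mem_singleton] at *
  grind

theorem squareColoringCount_eq_card_of_ne {a c : Fin 4} (hac : a ≠ c) (B D : Finset (Fin 4)) :
    squareColoringCount a c B D =
      #{r ∈ ({a, c} : Finset (Fin 4))ᶜ | B = {c, r} ∧ D = {a, r}} := by
  refine card_nbij' (fun q => q.2.1) (fun r => (c, r, a, {a, c})) ?_ ?_ ?_ ?_
  · rintro ⟨t, r, b, Y⟩ h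
    simp only [coe_filter, mem_univ, true_and, Set.mem_ofPred_eq, mem_compl, mem_insert,
      mem_singleton] at h ⊢
    obtain ⟨rfl, hat, hY, hcb, rfl, htr, rfl, hbr⟩ := h
    rw [pair_eq_pair_iff] at hY
    grind
  · intro r h
    simp only [coe_filter, mem_univ, true_and, Set.mem_ofPred_eq, mem_compl, mem_insert,
      mem_singleton] at h ⊢
    obtain ⟨hr, rfl, rfl⟩ := h
    exact ⟨hac, pair_comm a c, hac.symm, rfl, by grind, rfl, by grind⟩
  · rintro ⟨t, r, b, Y⟩ h
    simp only [coe_filter, mem_univ, true_and, Set.mem_ofPred_eq] at h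
    obtain ⟨rfl, hat, hY, hcb, -⟩ := h
    rw [pair_eq_pair_iff] at hY
    grind
  · intro r _
    rfl

theorem dumbbellColoringCount_eq_card (a c : Fin 4) (B D : Finset (Fin 4)) :
    dumbbellColoringCount a c B D =
      #{x ∈ ({a, c} : Finset (Fin 4))ᶜ | B = {a, x}ᶜ ∧ D = {c, x}ᶜ} := by
  unfold dumbbellColoringCount
  congr 1
  ext x
  simp only [mem_filter, mem_univ, true_and, mem_compl, mem_insert, mem_singleton]
  grind

theorem squareColoringCount_eq_dumbbellColoringCount {a c : Fin 4} (hac : a ≠ c)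
    (B D : Finset (Fin 4)) : squareColoringCount a c B D = dumbbellColoringCount a c B D := by
  obtain ⟨p, q, hpq, hcompl⟩ := card_eq_two.mp <|
    show #({a, c} : Finset (Fin 4))ᶜ = 2 by rw [card_compl, card_pair hac]; rfl
  have hcompl_ca : ({c, a} : Finset (Fin 4))ᶜ = {p, q} := by rw [pair_comm, hcompl]
  have hap := compl_pair_eq_of_compl_pair_eq hac hpq hcompl
  have hcp := compl_pair_eq_of_compl_pair_eq hac.symm hpq hcompl_ca
  have haq := compl_pair_eq_of_compl_pair_eq hac hpq.symm (pair_comm p q ▸ hcompl)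
  have hcq := compl_pair_eq_of_compl_pair_eq hac.symm hpq.symm (pair_comm p q ▸ hcompl_ca)
  rw [squareColoringCount_eq_card_of_ne hac, dumbbellColoringCount_eq_card, hcompl]
  -- the bar color of a dumbbell coloring is the color of `{a, c}ᶜ` that the square leaves free
  refine card_equiv (Equiv.swap p q) fun r => ?_
  simp only [mem_filter, mem_insert, mem_singleton]
  rcases eq_or_ne r p with rfl | hrp
  · rw [Equiv.swap_apply_left, haq, hcq]
    tauto
  rcases eq_or_ne r q with rfl | hrq
  · rw [Equiv.swap_apply_right, hap, hcp]
    tauto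
  · rw [Equiv.swap_apply_of_ne_of_ne hrp hrq]
    tauto

theorem squareColoringCount_self_of_ne (a : Fin 4) {B D : Finset (Fin 4)} (hBD : B ≠ D) :
    squareColoringCount a a B D = 0 := by
  refine card_eq_zero.mpr (filter_eq_empty_iff.mpr ?_)
  rintro ⟨t, r, b, Y⟩ - h
  dsimp only at h
  obtain ⟨rfl, hat, hY, -, rfl, -, rfl, -⟩ := h
  rw [pair_eq_pair_iff] at hY
  obtain rfl : t = b := by grind
  exact hBD rfl

theorem squareColoringCount_self {B : Finset (Fin 4)} (a : Fin 4) (hB : #B = 2) :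
    squareColoringCount a a B B = #(B.erase a) := by
  obtain ⟨x, y, hxy, rfl⟩ := card_eq_two.mp hB
  -- `Equiv.swap x y t` is the color of `{x, y}` other than `t`
  refine card_nbij' (fun q => q.1) (fun t => (t, Equiv.swap x y t, t, {a, t})) ?_ ?_ ?_ ?_
  · rintro ⟨t, r, b, Y⟩ h
    simp only [coe_filter, mem_univ, true_and, Set.mem_ofPred_eq, coe_erase, Set.mem_sdiff,
      mem_coe, Set.mem_singleton_iff] at h ⊢
    obtain ⟨-, hat, -, -, hB, -, -, -⟩ := h
    exact ⟨by rw [hB]; exact mem_insert_self t {r}, Ne.symm hat⟩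
  · intro t h
    simp only [coe_erase, Set.mem_sdiff, mem_coe, Set.mem_singleton_iff, mem_insert,
      mem_singleton, coe_filter, mem_univ, true_and, Set.mem_ofPred_eq] at h ⊢
    have hB : ({x, y} : Finset (Fin 4)) = {t, Equiv.swap x y t} := by
      rcases h.1 with rfl | rfl
      · rw [Equiv.swap_apply_left]
      · rw [Equiv.swap_apply_right, pair_comm]
    have ht : t ≠ Equiv.swap x y t := by
      rcases h.1 with rfl | rfl
      · rwa [Equiv.swap_apply_left]
      · rw [Equiv.swap_apply_right]; exact hxy.symm
    exact ⟨Ne.symm h.2, Ne.symm h.2, hB, ht, hB, ht⟩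
  · rintro ⟨t, r, b, Y⟩ h
    simp only [coe_filter, mem_univ, true_and, Set.mem_ofPred_eq] at h
    obtain ⟨rfl, hat, hY, -, hB, htr, -, -⟩ := h
    rw [pair_eq_pair_iff] at hY hB
    obtain rfl : t = b := by grind
    obtain rfl : r = Equiv.swap x y t := by
      rcases hB with ⟨rfl, rfl⟩ | ⟨rfl, rfl⟩
      · rw [Equiv.swap_apply_left]
      · rw [Equiv.swap_apply_right]
    rfl
  · intro t _
    rfl

theorem dumbbellColoringCount_self_of_ne (a : Fin 4) {B D : Finset (Fin 4)} (hBD : B ≠ D) :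
    dumbbellColoringCount a a B D = 0 :=
  card_eq_zero.mpr (filter_eq_empty_iff.mpr fun _ _ h => hBD (h.2.1.trans h.2.2.2.symm))

theorem dumbbellColoringCount_self {B : Finset (Fin 4)} (a : Fin 4) (hB : #B = 2) :
    dumbbellColoringCount a a B B = if a ∈ B then 0 else 1 := by
  split_ifs with ha
  · refine card_eq_zero.mpr (filter_eq_empty_iff.mpr fun t _ h => ?_)
    have : a ∈ ({a, t} : Finset (Fin 4))ᶜ := h.2.1 ▸ ha
    simp at this
  · obtain ⟨s, hs⟩ := card_eq_one.mp <| show #(Bᶜ.erase a) = 1 by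
      rw [card_erase_of_mem (mem_compl.mpr ha), card_compl, hB]; rfl
    have hsa : s ≠ a := (mem_erase.mp (hs ▸ mem_singleton_self s)).1
    have hBc : Bᶜ = {a, s} := by rw [← insert_erase (mem_compl.mpr ha), hs]
    refine card_eq_one.mpr ⟨s, eq_singleton_iff_unique_mem.mpr ⟨?_, fun t ht => ?_⟩⟩
    · refine mem_filter.mpr ⟨mem_univ s, hsa.symm, ?_, hsa.symm, ?_⟩ <;> rw [eq_compl_comm, hBc]
    · simp only [mem_filter, mem_univ, true_and, eq_compl_comm, hBc, pair_eq_pair_iff] at ht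
      grind

theorem squareColoringCount_eq_zero_of_notMem {a c : Fin 4} (hac : a ≠ c)
    {B : Finset (Fin 4)} (hc : c ∉ B) (D : Finset (Fin 4)) : squareColoringCount a c B D = 0 := by
  rw [squareColoringCount_eq_card_of_ne hac]
  refine card_eq_zero.mpr (filter_eq_empty_iff.mpr fun r _ h => hc ?_)
  rw [h.1]
  exact mem_insert_self c {r}

theorem squareColoringCount_pair_pair {a c r : Fin 4} (hac : a ≠ c)
    (hr : r ∉ ({a, c} : Finset (Fin 4))) : squareColoringCount a c {c, r} {a, r} = 1 := by
  rw [squareColoringCount_eq_card_of_ne hac, card_eq_one]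
  refine ⟨r, eq_singleton_iff_unique_mem.mpr ⟨mem_filter.mpr ⟨mem_compl.mpr hr, rfl, rfl⟩, ?_⟩⟩
  intro s hs
  simp only [mem_filter, mem_compl, mem_insert, mem_singleton, pair_eq_pair_iff] at hs hr
  grind

theorem squareColoringCount_eq_dumbbellColoringCount_add_arcsColoringCount (a c : Fin 4)
    {B : Finset (Fin 4)} (hB : #B = 2) (D : Finset (Fin 4)) :
    squareColoringCount a c B D = dumbbellColoringCount a c B D + arcsColoringCount a c B D := by
  rcases eq_or_ne a c with rfl | hac
  · by_cases hBD : B = D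
    · subst hBD
      have harcs : arcsColoringCount a a B B = 1 := if_pos ⟨rfl, rfl⟩
      rw [squareColoringCount_self a hB, dumbbellColoringCount_self a hB, harcs,
        card_erase_eq_ite, hB]
      split_ifs <;> rfl
    · rw [squareColoringCount_self_of_ne a hBD, dumbbellColoringCount_self_of_ne a hBD,
        arcsColoringCount, if_neg fun h => hBD h.2]
  · rw [squareColoringCount_eq_dumbbellColoringCount hac, arcsColoringCount,
      if_neg fun h => hac h.1, add_zero]

theorem Fin.distinct_of_insert_eq_univ {i j k l : Fin 4}
    (h : ({i, j, k, l} : Finset (Fin 4)) = univ) : i ≠ j ∧ i ≠ k ∧ j ≠ k := by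
  revert i j k l
  decide

/-- Local square relation for four-colorings: the number of colorings of the
square equals the number for the dumbbell with two defects plus the number for
the two disjoint arcs, for every boundary coloring; explicitly, for boundary
colorings `(i, ij, i, ij)`: `1 = 0 + 1`; `(k, ij, k, ij)`: `2 = 1 + 1`;
`(j, ij, k, ik)`: `0 = 0 + 0`; `(k, ij, j, ik)`: `1 = 1 + 0`,
where `{i,j,k,l} = {1,2,3,4}`. -/
theorem square_skein_relation :
    (∀ (a c : Fin 4) (B D : Finset (Fin 4)), B.card = 2 → D.card = 2 →
      squareColoringCount a c B D =
        dumbbellColoringCount a c B D + arcsColoringCount a c B D) ∧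
    (∀ i j k l : Fin 4, ({i, j, k, l} : Finset (Fin 4)) = Finset.univ →
      (squareColoringCount i i {i, j} {i, j} = 1 ∧
        dumbbellColoringCount i i {i, j} {i, j} = 0 ∧
        arcsColoringCount i i {i, j} {i, j} = 1) ∧
      (squareColoringCount k k {i, j} {i, j} = 2 ∧
        dumbbellColoringCount k k {i, j} {i, j} = 1 ∧
        arcsColoringCount k k {i, j} {i, j} = 1) ∧
      (squareColoringCount j k {i, j} {i, k} = 0 ∧
        dumbbellColoringCount j k {i, j} {i, k} = 0 ∧
        arcsColoringCount j k {i, j} {i, k} = 0) ∧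
      (squareColoringCount k j {i, j} {i, k} = 1 ∧
        dumbbellColoringCount k j {i, j} {i, k} = 1 ∧
        arcsColoringCount k j {i, j} {i, k} = 0)) := by
  refine ⟨fun a c B D hB _ =>
    squareColoringCount_eq_dumbbellColoringCount_add_arcsColoringCount a c hB D,
    fun i j k l h => ?_⟩
  obtain ⟨hij, hik, hjk⟩ := Fin.distinct_of_insert_eq_univ h
  have hB : #({i, j} : Finset (Fin 4)) = 2 := card_pair hij
  have hi : i ∈ ({i, j} : Finset (Fin 4)) := mem_insert_self i {j}
  have hk : k ∉ ({i, j} : Finset (Fin 4)) := by simp [hik.symm, hjk.symm]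
  have hsq_ii : squareColoringCount i i {i, j} {i, j} = 1 := by
    rw [squareColoringCount_self i hB, card_erase_of_mem hi, hB]
  have hsq_kk : squareColoringCount k k {i, j} {i, j} = 2 := by
    rw [squareColoringCount_self k hB, erase_eq_of_notMem hk, hB]
  have hsq_jk := squareColoringCount_eq_zero_of_notMem hjk hk {i, k}
  have hsq_kj : squareColoringCount k j {i, j} {i, k} = 1 := by
    rw [pair_comm i j, pair_comm i k]
    exact squareColoringCount_pair_pair hjk.symm (by simp [hik, hij])
  refine ⟨⟨hsq_ii, ?_, ?_⟩, ⟨hsq_kk, ?_, ?_⟩, ⟨hsq_jk, ?_, ?_⟩, ⟨hsq_kj, ?_, ?_⟩⟩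
  · rw [dumbbellColoringCount_self i hB, if_pos hi]
  · exact if_pos ⟨rfl, rfl⟩
  · rw [dumbbellColoringCount_self k hB, if_neg hk]
  · exact if_pos ⟨rfl, rfl⟩
  · rw [← squareColoringCount_eq_dumbbellColoringCount hjk, hsq_jk]
  · exact if_neg fun h => hjk h.1
  · rw [← squareColoringCount_eq_dumbbellColoringCount hjk.symm, hsq_kj]
  · exact if_neg fun h => hjk.symm h.1
end

section
/- Collapsing a triangle of type 112-112-112 with thin sides attached to a 222-vertex configuration preserves the number of 4-colorings: for each assignment of three 2-element subsets forming the 2-element subsets of a common 3-element subset of {1,2,3,4} to the three external thick edges, there is exactly one coloring of the internal triangle of thin edges compatible with all three 112-vertex conditions. -/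
/-!
The three 2-subsets of a 3-set meet pairwise in exactly one point and have no common point.
A coloring of the triangle must put on each thin edge the common color of the two thick edges
at its ends, so the colorings are exactly the points of `(B₁ ∩ B₂) × (B₂ ∩ B₃) × (B₃ ∩ B₁)`,
a product of three singletons.
-/

open Finset

namespace Finset

variable {α : Type*} [DecidableEq α]

theorem pairwise_ne_of_card_eq_three {a b c : α} (h : #{a, b, c} = 3) :
    a ≠ b ∧ a ≠ c ∧ b ≠ c := by
  refine ⟨?_, ?_, ?_⟩ <;> rintro rfl <;> simp at h <;>
    exact (card_le_two.trans_lt (by norm_num)).ne h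

theorem eq_pair_of_card_eq_two {s : Finset α} {a b : α} (hs : #s = 2) (ha : a ∈ s) (hb : b ∈ s)
    (hab : a ≠ b) : s = {a, b} :=
  (eq_of_subset_of_card_le (insert_subset ha (singleton_subset_iff.2 hb))
    (by rw [hs, card_pair hab])).symm

theorem card_inter_add_one_of_mem_powersetCard {k : ℕ} {T A B : Finset α} (hT : #T = k + 1)
    (hA : A ∈ powersetCard k T) (hB : B ∈ powersetCard k T) (hAB : A ≠ B) :
    #(A ∩ B) + 1 = k := by
  rw [mem_powersetCard] at hA hB
  have hunion : #(A ∪ B) ≤ k + 1 := hT ▸ card_le_card (union_subset hA.1 hB.1)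
  have hinter : #(A ∩ B) < k := by
    by_contra! hle
    have hAB' : A ∩ B = A := eq_of_subset_of_card_le inter_subset_left (hA.2 ▸ hle)
    exact hAB (eq_of_subset_of_card_le (hAB' ▸ inter_subset_right) (by omega))
  have := card_union_add_card_inter A B
  omega

theorem exists_mem_powersetCard_notMem {k : ℕ} {T : Finset α} (hT : #T = k + 1) {x : α}
    (hx : x ∈ T) : ∃ B ∈ powersetCard k T, x ∉ B :=
  ⟨T.erase x, mem_powersetCard.2 ⟨erase_subset x T, by rw [card_erase_of_mem hx, hT]; rfl⟩,
    notMem_erase x T⟩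

end Finset

theorem triangle_coloring_iff_mem_inter {α : Type*} [DecidableEq α] {B1 B2 B3 : Finset α}
    (h1 : #B1 = 2) (h2 : #B2 = 2) (h3 : #B3 = 2) (hdisj : ∀ x ∈ B1, x ∈ B2 → x ∉ B3)
    (x1 x2 x3 : α) :
    (B1 = {x3, x1} ∧ x3 ≠ x1 ∧ B2 = {x1, x2} ∧ x1 ≠ x2 ∧ B3 = {x2, x3} ∧ x2 ≠ x3) ↔
      x1 ∈ B1 ∩ B2 ∧ x2 ∈ B2 ∩ B3 ∧ x3 ∈ B3 ∩ B1 := by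
  constructor
  · rintro ⟨rfl, -, rfl, -, rfl, -⟩
    simp
  · simp only [mem_inter]
    rintro ⟨⟨hx1B1, hx1B2⟩, ⟨hx2B2, hx2B3⟩, ⟨hx3B3, hx3B1⟩⟩
    have h31 : x3 ≠ x1 := fun h => hdisj x1 hx1B1 hx1B2 (h ▸ hx3B3)
    have h12 : x1 ≠ x2 := fun h => hdisj x1 hx1B1 hx1B2 (h ▸ hx2B3)
    have h23 : x2 ≠ x3 := fun h => hdisj x2 (h ▸ hx3B1) hx2B2 hx2B3
    exact ⟨eq_pair_of_card_eq_two h1 hx3B1 hx1B1 h31, h31,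
      eq_pair_of_card_eq_two h2 hx1B2 hx2B2 h12, h12,
      eq_pair_of_card_eq_two h3 hx2B3 hx3B3 h23, h23⟩

/-- Collapsing a 112-112-112 triangle preserves four-colorings: for every
assignment of three 2-element subsets `B₁, B₂, B₃` to the external thick edges
that form the three 2-element subsets of a common 3-element subset `T` of the
pigments, there is exactly one coloring `(x₁₂, x₂₃, x₃₁)` of the three thin
triangle edges satisfying the 112-vertex condition (thick color = disjoint
union of the adjacent thin colors) at each of the three vertices. -/
theorem triangle_collapse_unique_coloring (T : Finset (Fin 4)) (hT : T.card = 3)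
    (B1 B2 B3 : Finset (Fin 4))
    (hB : ({B1, B2, B3} : Finset (Finset (Fin 4))) = Finset.powersetCard 2 T) :
    (Finset.univ.filter (fun x : Fin 4 × Fin 4 × Fin 4 =>
      B1 = ({x.2.2, x.1} : Finset (Fin 4)) ∧ x.2.2 ≠ x.1 ∧
      B2 = ({x.1, x.2.1} : Finset (Fin 4)) ∧ x.1 ≠ x.2.1 ∧
      B3 = ({x.2.1, x.2.2} : Finset (Fin 4)) ∧ x.2.1 ≠ x.2.2)).card = 1 := by
  have hmem : ∀ B ∈ ({B1, B2, B3} : Finset (Finset (Fin 4))), B ∈ powersetCard 2 T :=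
    fun B hB' => hB ▸ hB'
  have hB1 := hmem B1 (by simp)
  have hB2 := hmem B2 (by simp)
  have hB3 := hmem B3 (by simp)
  obtain ⟨h12, h13, h23⟩ := pairwise_ne_of_card_eq_three (a := B1) (b := B2) (c := B3)
    (by rw [hB, card_powersetCard, hT]; rfl)
  have hinter : ∀ {A B}, A ∈ powersetCard 2 T → B ∈ powersetCard 2 T → A ≠ B → #(A ∩ B) = 1 :=
    fun hA hB hAB => by have := card_inter_add_one_of_mem_powersetCard hT hA hB hAB; omega
  have hdisj : ∀ x ∈ B1, x ∈ B2 → x ∉ B3 := by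
    intro x hx1 hx2 hx3
    obtain ⟨B, hBT, hxB⟩ := exists_mem_powersetCard_notMem hT ((mem_powersetCard.1 hB1).1 hx1)
    rw [← hB] at hBT
    simp only [mem_insert, mem_singleton] at hBT
    rcases hBT with rfl | rfl | rfl <;> contradiction
  calc _ = #((B1 ∩ B2) ×ˢ (B2 ∩ B3) ×ˢ (B3 ∩ B1)) := by
        congr 1
        ext ⟨x1, x2, x3⟩
        simp only [mem_filter, mem_univ, true_and, mem_product]
        exact triangle_coloring_iff_mem_inter (mem_powersetCard.1 hB1).2
          (mem_powersetCard.1 hB2).2 (mem_powersetCard.1 hB3).2 hdisj x1 x2 x3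
    _ = 1 := by
        rw [card_product, card_product, hinter hB1 hB2 h12, hinter hB2 hB3 h23,
          hinter hB3 hB1 h13.symm]
end
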